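/- arXiv:2410.01129 — 4 statements merged into one kernel-verified Lean document; each statement's English description precedes it below -/
import Mathlib

section
/- For real parameters X_A, X_B, τ > 0 with X_B > τ, the function f(X₁) = (X_A/X₁)·(1 − X_B/(X₁ + √(X₁² − τ²))) defined for X₁ ≥ τ is increasing on [τ, √(X_B² + τ²)] and decreasing on [√(X_B² + τ²), ∞), so X₁ = √(X_B² + τ²) is its global maximizer on [τ, ∞). -/
/-!
Substituting `X₁ = τ / cos θ` with `θ ∈ [0, π/2)` gives `X₁ + √(X₁² - τ²) = τ (1 + sin θ) / cos θ`, and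
`f` becomes `X_A/τ² · (τ cos θ + X_B sin θ - X_B) = X_A/τ² · (M cos (θ - φ) - X_B)`, where
`M = √(X_B² + τ²)` and `cos φ = τ / M`. The angle `θ = arccos (τ / X₁)` increases with `X₁` and equals `φ`
exactly at `X₁ = M`, so `f` increases until `X₁ = M` and decreases afterwards.
-/

open Real Set

theorem mul_cos_add_mul_sin_eq_sqrt_mul_cos_sub (a : ℝ) {b : ℝ} (hb : 0 ≤ b) (θ : ℝ) :
    a * cos θ + b * sin θ = √(a ^ 2 + b ^ 2) * cos (θ - arccos (a / √(a ^ 2 + b ^ 2))) := by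
  set r := √(a ^ 2 + b ^ 2)
  rcases (sqrt_nonneg _ : 0 ≤ r).eq_or_lt with hr | hr
  · have hab : a ^ 2 + b ^ 2 ≤ 0 := sqrt_eq_zero'.mp hr.symm
    have ha0 : a = 0 := by nlinarith
    have hb0 : b = 0 := by nlinarith
    simp [ha0, hb0, r]
  have hr0 : r ≠ 0 := hr.ne'
  have hr2 : r ^ 2 = a ^ 2 + b ^ 2 := sq_sqrt (by positivity)
  have ha_le : |a / r| ≤ 1 := by
    rw [abs_div, abs_of_pos hr, div_le_one hr]
    exact abs_le_sqrt (le_add_of_nonneg_right (sq_nonneg b))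
  have hcos : cos (arccos (a / r)) = a / r := cos_arccos (abs_le.mp ha_le).1 (abs_le.mp ha_le).2
  have hsin : sin (arccos (a / r)) = b / r := by
    rw [sin_arccos, ← sqrt_sq (div_nonneg hb hr.le)]
    congr 1
    field_simp
    linear_combination r ^ 2 * hr2
  rw [cos_sub, hcos, hsin]
  field_simp

theorem div_mul_one_sub_div_add_sqrt_eq {τ X : ℝ} (A B : ℝ) (hτ : 0 < τ) (hX : τ ≤ X) :
    A / X * (1 - B / (X + √(X ^ 2 - τ ^ 2))) =
      A / τ ^ 2 * (τ * cos (arccos (τ / X)) + B * sin (arccos (τ / X)) - B) := by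
  set s := √(X ^ 2 - τ ^ 2)
  have hX0 : 0 < X := hτ.trans_le hX
  have hs0 : 0 ≤ s := sqrt_nonneg _
  have hs2 : s ^ 2 = X ^ 2 - τ ^ 2 := sq_sqrt (by nlinarith)
  have hcos : cos (arccos (τ / X)) = τ / X :=
    cos_arccos (by linarith [div_pos hτ hX0]) ((div_le_one hX0).mpr hX)
  have hsin : sin (arccos (τ / X)) = s / X := by
    rw [sin_arccos, ← sqrt_sq (div_nonneg hs0 hX0.le)]
    congr 1
    field_simp
    linear_combination -hs2
  rw [hcos, hsin]
  have hXs : 0 < X + s := by linarith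
  field_simp
  linear_combination (-(A * B)) * hs2

theorem monotoneOn_cos_sub {φ : ℝ} (hφ : φ ≤ π) : MonotoneOn (fun x ↦ cos (x - φ)) (Icc 0 φ) := by
  intro x hx y hy hxy
  simp only [← cos_neg (_ - φ), neg_sub]
  exact cos_le_cos_of_nonneg_of_le_pi (by linarith [hy.2]) (by linarith [hx.1]) (by linarith)

theorem antitoneOn_cos_sub {φ : ℝ} (hφ : 0 ≤ φ) : AntitoneOn (fun x ↦ cos (x - φ)) (Icc φ π) :=
  fun x hx y hy hxy ↦
    cos_le_cos_of_nonneg_of_le_pi (by linarith [hx.1]) (by linarith [hy.2]) (by linarith)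

theorem arccos_div_le_arccos_div {τ x y : ℝ} (hτ : 0 ≤ τ) (hx : 0 < x) (hxy : x ≤ y) :
    arccos (τ / x) ≤ arccos (τ / y) :=
  arccos_le_arccos (div_le_div_of_nonneg_left hτ hx hxy)

theorem stmt_0 (XA XB τ : ℝ) (hXA : 0 < XA) (hτ : 0 < τ) (hXB : XB > τ)
    (f : ℝ → ℝ)
    (hf : ∀ X₁, f X₁ = (XA / X₁) * (1 - XB / (X₁ + Real.sqrt (X₁ ^ 2 - τ ^ 2)))) :
    MonotoneOn f (Set.Icc τ (Real.sqrt (XB ^ 2 + τ ^ 2))) ∧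
    AntitoneOn f (Set.Ici (Real.sqrt (XB ^ 2 + τ ^ 2))) ∧
    ∀ X₁ ∈ Set.Ici τ, f X₁ ≤ f (Real.sqrt (XB ^ 2 + τ ^ 2)) := by
  set M := √(XB ^ 2 + τ ^ 2)
  set θ : ℝ → ℝ := fun X ↦ arccos (τ / X)
  have hτM : τ ≤ M := le_sqrt_of_sq_le (le_add_of_nonneg_left (sq_nonneg XB))
  have hθ : ∀ {x y}, τ ≤ x → x ≤ y → θ x ≤ θ y :=
    fun hx ↦ arccos_div_le_arccos_div hτ.le (hτ.trans_le hx)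
  have hf' : ∀ X, τ ≤ X → f X = XA / τ ^ 2 * (M * cos (θ X - θ M) - XB) := fun X hX ↦ by
    rw [hf, div_mul_one_sub_div_add_sqrt_eq XA XB hτ hX,
      mul_cos_add_mul_sin_eq_sqrt_mul_cos_sub τ (hτ.le.trans hXB.le), add_comm (τ ^ 2)]
  have hscale : Monotone fun c ↦ XA / τ ^ 2 * (M * c - XB) := fun c d hcd ↦ by
    have : 0 ≤ M := sqrt_nonneg _
    dsimp only
    gcongr
  have hmono : MonotoneOn f (Icc τ M) := fun a ha b hb hab ↦ by
    rw [hf' a ha.1, hf' b hb.1]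
    exact hscale <| monotoneOn_cos_sub (arccos_le_pi _) ⟨arccos_nonneg _, hθ ha.1 ha.2⟩
      ⟨arccos_nonneg _, hθ hb.1 hb.2⟩ (hθ ha.1 hab)
  have hanti : AntitoneOn f (Ici M) := fun a ha b hb hab ↦ by
    rw [hf' a (hτM.trans ha), hf' b (hτM.trans hb)]
    exact hscale <| antitoneOn_cos_sub (arccos_nonneg _) ⟨hθ hτM ha, arccos_le_pi _⟩
      ⟨hθ hτM hb, arccos_le_pi _⟩ (hθ (hτM.trans ha) hab)
  refine ⟨hmono, hanti, fun X hX ↦ ?_⟩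
  rcases le_total X M with h | h
  · exact hmono ⟨hX, h⟩ ⟨hτM, le_rfl⟩ h
  · exact hanti self_mem_Ici h h
end

section
/- Fix reals τ > 0, X_A, X₁ with τ/2 ≤ X_A < X₁ and X₁ ≥ τ. Define h(α) = (X₁ + √(X₁² − τ²))·(1 − α)²/(X_A − αX₁) + 2α on the interval where X_A − αX₁ > 0. Then h is strictly increasing in α on [0, X_A/X₁). -/
/-! Put `u = A - αX`, so that `α = (A - u)/X` and `1 - α = ((X - A) + u)/X`. Then
`c(1 - α)²/(A - αX) + 2α = c(X - A)²/(X²u) + (c - 2X)u/X² + const`, and both terms grow as `u`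
decreases, provided `0 ≤ c < 2X`. For `c = X₁ + √(X₁² - τ²)` the bound `c < 2X₁` is `√(X₁² - τ²) < X₁`. -/

open Set

lemma one_sub_sq_div_add_two_mul_sub (c A X a b : ℝ) (hX : X ≠ 0) (ha : A - a * X ≠ 0)
    (hb : A - b * X ≠ 0) :
    (c * (1 - b) ^ 2 / (A - b * X) + 2 * b) - (c * (1 - a) ^ 2 / (A - a * X) + 2 * a) =
      (b - a) * ((2 * X - c) * ((A - a * X) * (A - b * X)) + c * (X - A) ^ 2) /
        (X * ((A - a * X) * (A - b * X))) := by
  rw [div_add' _ _ _ hb, div_add' _ _ _ ha, div_sub_div _ _ hb ha,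
    div_eq_div_iff (mul_ne_zero hb ha) (mul_ne_zero hX (mul_ne_zero ha hb))]
  ring

lemma strictMonoOn_one_sub_sq_div_add_two_mul {c A X : ℝ} (hX : 0 < X) (hc₀ : 0 ≤ c)
    (hc : c < 2 * X) :
    StrictMonoOn (fun α => c * (1 - α) ^ 2 / (A - α * X) + 2 * α) (Iio (A / X)) := by
  intro a ha b hb hab
  have hua : 0 < A - a * X := by linarith [(lt_div_iff₀ hX).mp ha]
  have hub : 0 < A - b * X := by linarith [(lt_div_iff₀ hX).mp hb]
  rw [← sub_pos, one_sub_sq_div_add_two_mul_sub c A X a b hX.ne' hua.ne' hub.ne']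
  have hnum : 0 < (2 * X - c) * ((A - a * X) * (A - b * X)) + c * (X - A) ^ 2 := by
    have := mul_pos (sub_pos.mpr hc) (mul_pos hua hub)
    positivity
  exact div_pos (mul_pos (sub_pos.mpr hab) hnum) (mul_pos hX (mul_pos hua hub))

theorem stmt_7_general (τ XA X₁ : ℝ) (hτ : 0 < τ) (h3 : τ ≤ X₁)
    (h : ℝ → ℝ)
    (hh : ∀ α, h α = (X₁ + Real.sqrt (X₁ ^ 2 - τ ^ 2)) * (1 - α) ^ 2 / (XA - α * X₁) + 2 * α) :
    StrictMonoOn h (Set.Ico 0 (XA / X₁)) := by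
  have hX₁ : 0 < X₁ := hτ.trans_le h3
  have hsqrt : Real.sqrt (X₁ ^ 2 - τ ^ 2) < X₁ := (Real.sqrt_lt' hX₁).mpr (by nlinarith)
  have hc₀ : 0 ≤ X₁ + Real.sqrt (X₁ ^ 2 - τ ^ 2) := by positivity
  rw [funext hh]
  exact (strictMonoOn_one_sub_sq_div_add_two_mul hX₁ hc₀ (by linarith)).mono Ico_subset_Iio_self

theorem stmt_7 (τ XA X₁ : ℝ) (hτ : 0 < τ) (h1 : τ / 2 ≤ XA) (h2 : XA < X₁) (h3 : τ ≤ X₁)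
    (h : ℝ → ℝ)
    (hh : ∀ α, h α = (X₁ + Real.sqrt (X₁ ^ 2 - τ ^ 2)) * (1 - α) ^ 2 / (XA - α * X₁) + 2 * α) :
    StrictMonoOn h (Set.Ico 0 (XA / X₁)) :=
  stmt_7_general τ XA X₁ hτ h3 h hh
end

section
/- Let τ > 0 and 0 < X_B ≤ τ/2 ≤ X_A. For each X₁ ≥ max(5τ/4, X_A), the value (1 − X_B/τ) + (2X_B/τ)(X_A − τ/2)·(1/(2X₁ − τ))·(1 − τ/(X₁ + √(X₁² − τ²))) is at most its value at X₁ = max(5τ/4, X_A); in particular the supremum over X₁ ≥ max(τ, X_A) of this expression is attained at X₁* = max(5τ/4, X_A). -/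
lemma aux_f_le (τ u v : ℝ) (hτ : 0 < τ)
    (h : 0 ≤ (u - v) * (u * v - τ * (u + v))) :
    (u - τ) / (u ^ 2 - τ * u + τ ^ 2) ≤ (v - τ) / (v ^ 2 - τ * v + τ ^ 2) := by
  have hu : 0 < u ^ 2 - τ * u + τ ^ 2 := by
    nlinarith [sq_nonneg (2 * u - τ), mul_pos hτ hτ]
  have hv : 0 < v ^ 2 - τ * v + τ ^ 2 := by
    nlinarith [sq_nonneg (2 * v - τ), mul_pos hτ hτ]
  rw [div_le_div_iff₀ hu hv]
  nlinarith [h]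

theorem stmt_16 (τ XB XA : ℝ) (hτ : 0 < τ) (hB0 : 0 < XB) (hB : XB ≤ τ / 2)
    (hA : τ / 2 ≤ XA)
    (G : ℝ → ℝ)
    (hG : ∀ X₁, G X₁ = (1 - XB / τ) + (2 * XB / τ) * (XA - τ / 2) * (1 / (2 * X₁ - τ)) *
      (1 - τ / (X₁ + Real.sqrt (X₁ ^ 2 - τ ^ 2)))) :
    (∀ X₁, max (5 * τ / 4) XA ≤ X₁ → G X₁ ≤ G (max (5 * τ / 4) XA)) ∧
    (∀ X₁, max τ XA ≤ X₁ → G X₁ ≤ G (max (5 * τ / 4) XA)) := by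
  have hK : 0 ≤ 2 * XB / τ * (XA - τ / 2) :=
    mul_nonneg (by positivity) (by linarith)
  -- representation of G via u = x + sqrt(x^2 - τ^2)
  have hrep : ∀ x, τ ≤ x → G x = (1 - XB / τ) + (2 * XB / τ) * (XA - τ / 2) *
      ((x + Real.sqrt (x ^ 2 - τ ^ 2) - τ) /
        ((x + Real.sqrt (x ^ 2 - τ ^ 2)) ^ 2 - τ * (x + Real.sqrt (x ^ 2 - τ ^ 2)) + τ ^ 2)) := by
    intro x hx
    rw [hG]
    set s := Real.sqrt (x ^ 2 - τ ^ 2) with hs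
    have hs0 : 0 ≤ s := Real.sqrt_nonneg _
    have hs2 : s ^ 2 = x ^ 2 - τ ^ 2 := Real.sq_sqrt (by nlinarith)
    have h2x : (0:ℝ) < 2 * x - τ := by linarith
    have hu0 : (0:ℝ) < x + s := by linarith
    have hD : (x + s) ^ 2 - τ * (x + s) + τ ^ 2 = (2 * x - τ) * (x + s) := by
      linear_combination hs2
    rw [hD]
    field_simp
  -- monotonicity of u
  have hu_mono : ∀ x y, τ ≤ y → y ≤ x →
      y + Real.sqrt (y ^ 2 - τ ^ 2) ≤ x + Real.sqrt (x ^ 2 - τ ^ 2) := by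
    intro x y hy hyx
    have h1 : Real.sqrt (y ^ 2 - τ ^ 2) ≤ Real.sqrt (x ^ 2 - τ ^ 2) :=
      Real.sqrt_le_sqrt (by nlinarith)
    linarith
  have hu54 : 5 * τ / 4 + Real.sqrt ((5 * τ / 4) ^ 2 - τ ^ 2) = 2 * τ := by
    rw [show (5 * τ / 4) ^ 2 - τ ^ 2 = (3 * τ / 4) ^ 2 by ring,
      Real.sqrt_sq (by positivity)]
    ring
  have hτ54 : τ ≤ 5 * τ / 4 := by linarith
  -- key comparison
  have key : ∀ x y, τ ≤ x → τ ≤ y →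
      0 ≤ ((x + Real.sqrt (x ^ 2 - τ ^ 2)) - (y + Real.sqrt (y ^ 2 - τ ^ 2))) *
        ((x + Real.sqrt (x ^ 2 - τ ^ 2)) * (y + Real.sqrt (y ^ 2 - τ ^ 2)) -
          τ * ((x + Real.sqrt (x ^ 2 - τ ^ 2)) + (y + Real.sqrt (y ^ 2 - τ ^ 2)))) →
      G x ≤ G y := by
    intro x y hx hy hprod
    rw [hrep x hx, hrep y hy]
    have h := aux_f_le τ _ _ hτ hprod
    nlinarith [mul_le_mul_of_nonneg_left h hK]
  rcases le_total XA (5 * τ / 4) with hc | hc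
  · have hmax : max (5 * τ / 4) XA = 5 * τ / 4 := max_eq_left hc
    rw [hmax]
    have hglob : ∀ x, τ ≤ x → G x ≤ G (5 * τ / 4) := by
      intro x hx
      apply key x (5 * τ / 4) hx hτ54
      rw [hu54]
      nlinarith [mul_nonneg hτ.le (sq_nonneg (x + Real.sqrt (x ^ 2 - τ ^ 2) - 2 * τ))]
    constructor
    · intro x hx; exact hglob x (by linarith)
    · intro x hx
      have : τ ≤ x := le_trans (le_max_left _ _) hx
      exact hglob x this
  · have hmax : max (5 * τ / 4) XA = XA := max_eq_right hc
    have hA' : τ ≤ XA := by linarith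
    have hmax2 : max τ XA = XA := max_eq_right hA'
    rw [hmax, hmax2]
    have hdec : ∀ x, XA ≤ x → G x ≤ G XA := by
      intro x hx
      apply key x XA (le_trans hA' hx) hA'
      have hv2 : 2 * τ ≤ XA + Real.sqrt (XA ^ 2 - τ ^ 2) := by
        have := hu_mono XA (5 * τ / 4) hτ54 hc
        linarith [hu54 ▸ this]
      have huv : XA + Real.sqrt (XA ^ 2 - τ ^ 2) ≤ x + Real.sqrt (x ^ 2 - τ ^ 2) :=
        hu_mono x XA hA' hx
      set u := x + Real.sqrt (x ^ 2 - τ ^ 2)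
      set v := XA + Real.sqrt (XA ^ 2 - τ ^ 2)
      have h1 : 0 ≤ u - v := by linarith
      have h2 : 0 ≤ v - τ := by linarith
      have h3 : 0 ≤ v := by linarith
      have h4 : 0 ≤ v - 2 * τ := by linarith
      nlinarith [mul_nonneg h1 h2, mul_nonneg h3 h4, mul_nonneg h1 (by nlinarith [mul_nonneg h1 h2, mul_nonneg h3 h4] : 0 ≤ u * v - τ * (u + v))]
    exact ⟨hdec, hdec⟩
end

section
/- For all positive reals X_A, X_B, τ with X_A ≤ √(X_B² + τ²), the GLI Breaker payoff with information, 1 − X_A/(X_B + √(X_B² + τ²)), is at least the no-information General Lotto payoff: 1 − X_A/(X_B + √(X_B² + τ²)) ≥ 1 − X_A/(2X_B) when X_A ≤ X_B, and 1 − X_A/(X_B + √(X_B² + τ²)) ≥ X_B/(2X_A) when X_B ≤ X_A ≤ √(X_B² + τ²). -/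
theorem stmt_19 (XA XB τ : ℝ) (hA : 0 < XA) (hB : 0 < XB) (hτ : 0 < τ)
    (h : XA ≤ Real.sqrt (XB ^ 2 + τ ^ 2)) :
    (XA ≤ XB → 1 - XA / (XB + Real.sqrt (XB ^ 2 + τ ^ 2)) ≥ 1 - XA / (2 * XB)) ∧
    (XB ≤ XA → 1 - XA / (XB + Real.sqrt (XB ^ 2 + τ ^ 2)) ≥ XB / (2 * XA)) := by
  set s := Real.sqrt (XB ^ 2 + τ ^ 2) with hsdef
  have hs2 : s ^ 2 = XB ^ 2 + τ ^ 2 := Real.sq_sqrt (by positivity)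
  have hsB : XB ≤ s := by nlinarith [Real.sqrt_nonneg (XB ^ 2 + τ ^ 2)]
  have hspos : 0 < s := lt_of_lt_of_le hB hsB
  have hden : 0 < XB + s := by linarith
  constructor
  · intro hAB
    have : XA / (XB + s) ≤ XA / (2 * XB) :=
      div_le_div_of_nonneg_left hA.le (by linarith) (by linarith)
    linarith
  · intro hBA
    have key : XB / (2 * XA) ≤ (XB + s - XA) / (XB + s) := by
      rw [div_le_div_iff₀ (by linarith) hden]
      nlinarith [mul_nonneg (sub_nonneg.2 hBA) (sub_nonneg.2 h)]
    have heq : (XB + s - XA) / (XB + s) = 1 - XA / (XB + s) := by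
      field_simp
    linarith [key, heq ▸ key]
end
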